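/- arXiv:1702.01456 — 2 statements merged into one kernel-verified Lean document; each statement's English description precedes it below -/
import Mathlib

section
/- Every positive contraction T on L¹ of a standard Borel probability space (X, 𝒜, μ) has a dilation to an integral-preserving positive contraction: there exists a measure space (X', 𝒜', μ') containing (X, 𝒜, μ), an integral-preserving positive contraction T' on L¹(μ'), and a conditional-expectation-type positive projection E : L¹(μ') → L¹(μ) such that E (T')ⁿ f = Tⁿ f for all n ≥ 0 and all f ∈ L¹(μ) (viewed inside L¹(μ')). -/
/-!
Transport `μ` to `ℝ` by a measurable embedding (which exists as `X` is standard Borel; the new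
space has to live in `Type`) and take two disjoint copies of it on `ℝ ⊕ ℝ`, so that
`L¹(μ') ≅ L¹(μ) × L¹(μ)` with the norm `‖f₁‖ + ‖f₂‖`. Let `T'` act by `T` on the first copy and
deposit the mass `∫ f₁ - ∫ T f₁` lost by `T`, as a multiple of the constant `1`, on the second
copy, where all mass stays. This preserves integrals by construction, and the first coordinate of
`T'ⁿ (f, 0)` is `Tⁿ f`. Positivity and contractivity of `T` give `∫ T f ≤ ∫ f` for `f ≥ 0`, so
`T'` is positive, and, splitting `f = f⁺ - f⁻`, `‖T f‖ + |∫ f - ∫ T f| ≤ ‖f‖`, so `T'` is a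
contraction.
-/

open MeasureTheory

namespace MeasureTheory

variable {X : Type*} [MeasurableSpace X] {μ : Measure X}

namespace L1

theorem norm_eq_integral_of_nonneg {f : Lp ℝ 1 μ} (hf : 0 ≤ f) : ‖f‖ = integral f := by
  rw [norm_eq_integral_norm, integral_eq_integral]
  refine integral_congr_ae ?_
  filter_upwards [(Lp.coeFn_nonneg f).2 hf] with x hx
  exact Real.norm_of_nonneg hx

theorem norm_eq_integral_posPart_add_integral_negPart (f : Lp ℝ 1 μ) :
    ‖f‖ = integral f⁺ + integral f⁻ := by
  rw [← norm_abs_eq_norm, ← posPart_add_negPart,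
    norm_eq_integral_of_nonneg (add_nonneg (posPart_nonneg f) (negPart_nonneg f)), integral_add]

section PositiveContraction

variable {T : Lp ℝ 1 μ →ₗ[ℝ] Lp ℝ 1 μ} (hpos : ∀ f, 0 ≤ f → 0 ≤ T f)
  (hcontr : ∀ f, ‖T f‖ ≤ ‖f‖)
include hpos hcontr

theorem integral_apply_le_of_nonneg {f : Lp ℝ 1 μ} (hf : 0 ≤ f) :
    integral (T f) ≤ integral f := by
  rw [← norm_eq_integral_of_nonneg (hpos f hf), ← norm_eq_integral_of_nonneg hf]
  exact hcontr f

theorem norm_apply_add_abs_integral_sub_le (f : Lp ℝ 1 μ) :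
    ‖T f‖ + |integral f - integral (T f)| ≤ ‖f‖ := by
  obtain ⟨p, n, hp, hn, rfl, hnorm⟩ :
      ∃ p n, 0 ≤ p ∧ 0 ≤ n ∧ f = p - n ∧ ‖f‖ = integral p + integral n :=
    ⟨f⁺, f⁻, posPart_nonneg f, negPart_nonneg f, (posPart_sub_negPart f).symm,
      norm_eq_integral_posPart_add_integral_negPart f⟩
  have hTp := norm_eq_integral_of_nonneg (hpos p hp)
  have hTn := norm_eq_integral_of_nonneg (hpos n hn)
  have hp_le := integral_apply_le_of_nonneg hpos hcontr hp
  have hn_le := integral_apply_le_of_nonneg hpos hcontr hn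
  have hT := norm_sub_le (T p) (T n)
  rw [map_sub, integral_sub, integral_sub, hnorm]
  have habs : |integral p - integral n - (integral (T p) - integral (T n))| ≤
      (integral p - integral (T p)) + (integral n - integral (T n)) :=
    abs_le.2 ⟨by linarith, by linarith⟩
  linarith

end PositiveContraction

section Dilation

variable (T : Lp ℝ 1 μ →ₗ[ℝ] Lp ℝ 1 μ) (u : Lp ℝ 1 μ)

noncomputable def dilation : Module.End ℝ (Lp ℝ 1 μ × Lp ℝ 1 μ) where
  toFun x := (T x.1, (integral x.1 - integral (T x.1)) • u + x.2)
  map_add' x y := by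
    ext1
    · exact map_add T x.1 y.1
    · simp only [Prod.fst_add, Prod.snd_add, map_add, integral_add]
      module
  map_smul' c x := by
    ext1
    · exact map_smul T c x.1
    · simp only [Prod.smul_fst, Prod.smul_snd, map_smul, integral_smul, RingHom.id_apply,
        Prod.smul_mk, smul_eq_mul]
      module

@[simp]
theorem dilation_apply (x : Lp ℝ 1 μ × Lp ℝ 1 μ) :
    dilation T u x = (T x.1, (integral x.1 - integral (T x.1)) • u + x.2) :=
  rfl

theorem fst_dilation_pow_apply (n : ℕ) (x : Lp ℝ 1 μ × Lp ℝ 1 μ) :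
    ((dilation T u ^ n) x).1 = (T ^ n) x.1 := by
  induction n with
  | zero => rfl
  | succ n ih =>
    rw [pow_succ', pow_succ', Module.End.mul_apply, Module.End.mul_apply, dilation_apply, ih]

theorem integral_dilation (hu : integral u = 1) (x : Lp ℝ 1 μ × Lp ℝ 1 μ) :
    integral (dilation T u x).1 + integral (dilation T u x).2 = integral x.1 + integral x.2 := by
  simp only [dilation_apply, integral_add, integral_smul, hu, smul_eq_mul, mul_one]
  ring

variable {T} (hpos : ∀ f, 0 ≤ f → 0 ≤ T f) (hcontr : ∀ f, ‖T f‖ ≤ ‖f‖)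
include hpos hcontr

theorem dilation_nonneg {u : Lp ℝ 1 μ} (hu : 0 ≤ u) {x : Lp ℝ 1 μ × Lp ℝ 1 μ} (hx : 0 ≤ x) :
    0 ≤ dilation T u x := by
  set c := integral x.1 - integral (T x.1)
  have hc : 0 ≤ c := sub_nonneg.2 (integral_apply_le_of_nonneg hpos hcontr hx.1)
  have hcu : 0 ≤ c • u := by
    rw [← Lp.coeFn_nonneg] at hu ⊢
    filter_upwards [Lp.coeFn_smul c u, hu] with y hy huy
    simpa [hy] using mul_nonneg hc huy
  exact ⟨hpos _ hx.1, add_nonneg hcu hx.2⟩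

theorem norm_dilation_le {u : Lp ℝ 1 μ} (hu : ‖u‖ ≤ 1) (x : Lp ℝ 1 μ × Lp ℝ 1 μ) :
    ‖(dilation T u x).1‖ + ‖(dilation T u x).2‖ ≤ ‖x.1‖ + ‖x.2‖ := by
  set c := integral x.1 - integral (T x.1)
  have hsnd : ‖c • u + x.2‖ ≤ |c| + ‖x.2‖ :=
    calc ‖c • u + x.2‖ ≤ |c| * ‖u‖ + ‖x.2‖ := by
          simpa [norm_smul] using norm_add_le (c • u) x.2
      _ ≤ |c| + ‖x.2‖ := by
          gcongr
          exact mul_le_of_le_one_right (abs_nonneg c) hu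
  simp only [dilation_apply]
  linarith [norm_apply_add_abs_integral_sub_le hpos hcontr x.1]

end Dilation

end L1

section CompOfMapLE

variable {Z E : Type*} [MeasurableSpace Z] [NormedAddCommGroup E] {p : ENNReal}
  {ν : Measure Z} {j : X → Z}

theorem Lp.memLp_comp_of_map_le (hj : Measurable j) (hle : μ.map j ≤ ν) (g : Lp E p ν) :
    MemLp (g ∘ j) p μ :=
  (memLp_map_measure_iff (Lp.stronglyMeasurable g).aestronglyMeasurable hj.aemeasurable).1
    ((Lp.memLp g).mono_measure hle)

variable [NormedSpace ℝ E]

noncomputable def Lp.compOfMapLE (hj : Measurable j) (hle : μ.map j ≤ ν) :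
    Lp E p ν →ₗ[ℝ] Lp E p μ where
  toFun g := (Lp.memLp_comp_of_map_le hj hle g).toLp _
  map_add' g h := by
    rw [← MemLp.toLp_add]
    exact MemLp.toLp_congr _ _ (ae_of_ae_map hj.aemeasurable (ae_mono hle (Lp.coeFn_add g h)))
  map_smul' c g := by
    rw [RingHom.id_apply, ← MemLp.toLp_const_smul]
    exact MemLp.toLp_congr _ _ (ae_of_ae_map hj.aemeasurable (ae_mono hle (Lp.coeFn_smul c g)))

theorem Lp.coeFn_compOfMapLE (hj : Measurable j) (hle : μ.map j ≤ ν) (g : Lp E p ν) :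
    Lp.compOfMapLE hj hle g =ᵐ[μ] g ∘ j :=
  MemLp.coeFn_toLp (Lp.memLp_comp_of_map_le hj hle g)

end CompOfMapLE

theorem _root_.MeasurableEmbedding.sumInl {Y Z : Type*} [MeasurableSpace Y] [MeasurableSpace Z] :
    MeasurableEmbedding (Sum.inl : Y → Y ⊕ Z) :=
  ⟨Sum.inl_injective, measurable_inl, fun _ hs => hs.inl_image⟩

theorem _root_.MeasurableEmbedding.sumInr {Y Z : Type*} [MeasurableSpace Y] [MeasurableSpace Z] :
    MeasurableEmbedding (Sum.inr : Z → Y ⊕ Z) :=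
  ⟨Sum.inr_injective, measurable_inr, fun _ hs => hs.inr_image⟩

section DoubleMeasure

variable {Y E : Type*} [MeasurableSpace Y] [NormedAddCommGroup E] {e : X → Y}

noncomputable def doubleMeasure (μ : Measure X) (e : X → Y) : Measure (Y ⊕ Y) :=
  μ.map (Sum.inl ∘ e) + μ.map (Sum.inr ∘ e)

theorem map_inl_le_doubleMeasure : μ.map (Sum.inl ∘ e) ≤ doubleMeasure μ e :=
  Measure.le_add_right le_rfl

theorem map_inr_le_doubleMeasure : μ.map (Sum.inr ∘ e) ≤ doubleMeasure μ e :=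
  Measure.le_add_left le_rfl

noncomputable def restrictL1 (he : Measurable e) :
    Lp ℝ 1 (doubleMeasure μ e) →ₗ[ℝ] Lp ℝ 1 μ × Lp ℝ 1 μ :=
  (Lp.compOfMapLE (measurable_inl.comp he) map_inl_le_doubleMeasure).prod
    (Lp.compOfMapLE (measurable_inr.comp he) map_inr_le_doubleMeasure)

theorem coeFn_restrictL1_fst (he : Measurable e) (g : Lp ℝ 1 (doubleMeasure μ e)) :
    (restrictL1 he g).1 =ᵐ[μ] fun x => g (.inl (e x)) :=
  Lp.coeFn_compOfMapLE _ _ g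

theorem coeFn_restrictL1_snd (he : Measurable e) (g : Lp ℝ 1 (doubleMeasure μ e)) :
    (restrictL1 he g).2 =ᵐ[μ] fun x => g (.inr (e x)) :=
  Lp.coeFn_compOfMapLE _ _ g

variable (he : MeasurableEmbedding e)
include he

theorem ae_doubleMeasure_iff {P : Y ⊕ Y → Prop} :
    (∀ᵐ y ∂doubleMeasure μ e, P y) ↔
      (∀ᵐ x ∂μ, P (.inl (e x))) ∧ ∀ᵐ x ∂μ, P (.inr (e x)) := by
  rw [doubleMeasure, ae_add_measure_iff, (MeasurableEmbedding.sumInl.comp he).ae_map_iff,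
    (MeasurableEmbedding.sumInr.comp he).ae_map_iff]
  rfl

theorem integrable_doubleMeasure_iff {g : Y ⊕ Y → E} :
    Integrable g (doubleMeasure μ e) ↔
      Integrable (fun x => g (.inl (e x))) μ ∧ Integrable (fun x => g (.inr (e x))) μ := by
  rw [doubleMeasure, integrable_add_measure,
    (MeasurableEmbedding.sumInl.comp he).integrable_map_iff,
    (MeasurableEmbedding.sumInr.comp he).integrable_map_iff]
  rfl

theorem integral_doubleMeasure [NormedSpace ℝ E] {g : Y ⊕ Y → E}
    (hg : Integrable g (doubleMeasure μ e)) :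
    ∫ y, g y ∂doubleMeasure μ e = ∫ x, g (.inl (e x)) ∂μ + ∫ x, g (.inr (e x)) ∂μ := by
  rw [doubleMeasure] at hg ⊢
  rw [integral_add_measure (integrable_add_measure.1 hg).1 (integrable_add_measure.1 hg).2,
    (MeasurableEmbedding.sumInl.comp he).integral_map,
    (MeasurableEmbedding.sumInr.comp he).integral_map]
  rfl

theorem integrable_sumElim_extend (f₁ f₂ : Lp ℝ 1 μ) :
    Integrable (Sum.elim (Function.extend e f₁ 0) (Function.extend e f₂ 0))
      (doubleMeasure μ e) := by
  rw [integrable_doubleMeasure_iff he]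
  simp only [Sum.elim_inl, Sum.elim_inr, he.injective.extend_apply]
  exact ⟨L1.integrable_coeFn f₁, L1.integrable_coeFn f₂⟩

noncomputable def splitL1 : Lp ℝ 1 (doubleMeasure μ e) ≃ₗ[ℝ] Lp ℝ 1 μ × Lp ℝ 1 μ where
  __ := restrictL1 he.measurable
  invFun x := (integrable_sumElim_extend he x.1 x.2).toL1 _
  left_inv g := by
    ext1
    refine (Integrable.coeFn_toL1 _).trans ((ae_doubleMeasure_iff he).2 ⟨?_, ?_⟩)
    · filter_upwards [coeFn_restrictL1_fst he.measurable g] with x hx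
      exact (he.injective.extend_apply _ _ x).trans hx
    · filter_upwards [coeFn_restrictL1_snd he.measurable g] with x hx
      exact (he.injective.extend_apply _ _ x).trans hx
  right_inv x := by
    have hx := integrable_sumElim_extend he x.1 x.2
    have h := (ae_doubleMeasure_iff he).1 hx.coeFn_toL1
    ext1 <;> ext1
    · filter_upwards [coeFn_restrictL1_fst he.measurable (hx.toL1 _), h.1] with y hy h₁
      exact hy.trans (h₁.trans (he.injective.extend_apply _ _ y))
    · filter_upwards [coeFn_restrictL1_snd he.measurable (hx.toL1 _), h.2] with y hy h₂
      exact hy.trans (h₂.trans (he.injective.extend_apply _ _ y))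

theorem coeFn_splitL1_symm (x : Lp ℝ 1 μ × Lp ℝ 1 μ) :
    (splitL1 he).symm x =ᵐ[doubleMeasure μ e]
      Sum.elim (Function.extend e x.1 0) (Function.extend e x.2 0) :=
  (integrable_sumElim_extend he x.1 x.2).coeFn_toL1

theorem norm_splitL1_symm (x : Lp ℝ 1 μ × Lp ℝ 1 μ) :
    ‖(splitL1 he).symm x‖ = ‖x.1‖ + ‖x.2‖ := by
  rw [L1.norm_eq_integral_norm,
    integral_congr_ae ((coeFn_splitL1_symm he x).mono fun _ hy => congrArg norm hy),
    integral_doubleMeasure he (integrable_sumElim_extend he x.1 x.2).norm]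
  simp only [Sum.elim_inl, Sum.elim_inr, he.injective.extend_apply, L1.norm_eq_integral_norm]

theorem integral_splitL1_symm (x : Lp ℝ 1 μ × Lp ℝ 1 μ) :
    L1.integral ((splitL1 he).symm x) = L1.integral x.1 + L1.integral x.2 := by
  rw [L1.integral_eq_integral, integral_congr_ae (coeFn_splitL1_symm he x),
    integral_doubleMeasure he (integrable_sumElim_extend he x.1 x.2)]
  simp only [Sum.elim_inl, Sum.elim_inr, he.injective.extend_apply, L1.integral_eq_integral]

theorem splitL1_symm_nonneg_iff {x : Lp ℝ 1 μ × Lp ℝ 1 μ} :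
    0 ≤ (splitL1 he).symm x ↔ 0 ≤ x := by
  rw [← Lp.coeFn_nonneg, Prod.le_def, Prod.fst_zero, Prod.snd_zero, ← Lp.coeFn_nonneg,
    ← Lp.coeFn_nonneg, Filter.EventuallyLE,
    Filter.eventually_congr ((coeFn_splitL1_symm he x).mono fun _ hy => by rw [hy]),
    ae_doubleMeasure_iff he]
  simp only [Sum.elim_inl, Sum.elim_inr, he.injective.extend_apply]
  rfl

theorem splitL1_nonneg_iff {g : Lp ℝ 1 (doubleMeasure μ e)} : 0 ≤ splitL1 he g ↔ 0 ≤ g := by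
  rw [← splitL1_symm_nonneg_iff he, LinearEquiv.symm_apply_apply]

theorem norm_eq_norm_splitL1_fst_add_snd (g : Lp ℝ 1 (doubleMeasure μ e)) :
    ‖g‖ = ‖(splitL1 he g).1‖ + ‖(splitL1 he g).2‖ := by
  rw [← norm_splitL1_symm he, LinearEquiv.symm_apply_apply]

theorem integral_eq_integral_splitL1_fst_add_snd (g : Lp ℝ 1 (doubleMeasure μ e)) :
    L1.integral g = L1.integral (splitL1 he g).1 + L1.integral (splitL1 he g).2 := by
  rw [← integral_splitL1_symm he, LinearEquiv.symm_apply_apply]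

end DoubleMeasure

end MeasureTheory

/-- **Reduction to the integral-preserving case.** Every positive contraction
`T` on `L¹` of a standard Borel probability space has a dilation to an
integral-preserving positive contraction: there are a measure space
`(X', μ')`, a positive isometric embedding `D : L¹(μ) → L¹(μ')`, an
integral-preserving positive contraction `T'` on `L¹(μ')`, and a positive
contractive projection `E : L¹(μ') → L¹(μ)` with `E ∘ D = id` such that
`E (T')ⁿ (D f) = Tⁿ f` for all `n ≥ 0` and `f ∈ L¹(μ)`. -/
theorem positive_contraction_dilates_to_integral_preserving
    {X : Type*} [MeasurableSpace X] [StandardBorelSpace X]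
    (μ : Measure X) [IsProbabilityMeasure μ]
    (T : Lp ℝ 1 μ →ₗ[ℝ] Lp ℝ 1 μ)
    (hpos : ∀ f : Lp ℝ 1 μ, 0 ≤ᵐ[μ] ⇑f → 0 ≤ᵐ[μ] ⇑(T f))
    (hcontr : ∀ f : Lp ℝ 1 μ, ‖T f‖ ≤ ‖f‖) :
    ∃ (X' : Type) (_ : MeasurableSpace X') (μ' : Measure X')
      (D : Lp ℝ 1 μ →ₗᵢ[ℝ] Lp ℝ 1 μ')
      (T' : Lp ℝ 1 μ' →ₗ[ℝ] Lp ℝ 1 μ')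
      (E : Lp ℝ 1 μ' →ₗ[ℝ] Lp ℝ 1 μ),
      (∀ f : Lp ℝ 1 μ, 0 ≤ᵐ[μ] ⇑f → 0 ≤ᵐ[μ'] ⇑(D f)) ∧
      (∀ g : Lp ℝ 1 μ', 0 ≤ᵐ[μ'] ⇑g → 0 ≤ᵐ[μ'] ⇑(T' g)) ∧
      (∀ g : Lp ℝ 1 μ', ‖T' g‖ ≤ ‖g‖) ∧
      (∀ g : Lp ℝ 1 μ', ∫ x, T' g x ∂μ' = ∫ x, g x ∂μ') ∧
      (∀ g : Lp ℝ 1 μ', 0 ≤ᵐ[μ'] ⇑g → 0 ≤ᵐ[μ] ⇑(E g)) ∧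
      (∀ g : Lp ℝ 1 μ', ‖E g‖ ≤ ‖g‖) ∧
      (∀ f : Lp ℝ 1 μ, E (D f) = f) ∧
      (∀ (n : ℕ) (f : Lp ℝ 1 μ), E ((T' ^ n) (D f)) = (T ^ n) f) := by
  simp only [Lp.coeFn_nonneg, ← L1.integral_eq_integral] at hpos ⊢
  obtain ⟨e, he⟩ := exists_measurableEmbedding_real X
  obtain ⟨u, hu, hu_norm, hu_integral⟩ :
      ∃ u : Lp ℝ 1 μ, 0 ≤ u ∧ ‖u‖ ≤ 1 ∧ L1.integral u = 1 :=
    ⟨Lp.const 1 μ 1, (Lp.coeFn_nonneg _).1 (.of_forall fun _ => by simp),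
      (Lp.norm_const_le 1 μ (1 : ℝ)).trans_eq (by simp), by simp [L1.integral_eq_integral]⟩
  refine ⟨ℝ ⊕ ℝ, inferInstance, doubleMeasure μ e,
    { toLinearMap := (splitL1 he).symm.toLinearMap ∘ₗ LinearMap.inl ℝ _ _
      norm_map' := fun f => by simp [norm_splitL1_symm] },
    (splitL1 he).symm.conjRingEquiv (L1.dilation T u),
    LinearMap.fst ℝ _ _ ∘ₗ (splitL1 he).toLinearMap,
    fun f hf => (splitL1_symm_nonneg_iff he).2 ⟨hf, le_rfl⟩,
    fun g hg => (splitL1_symm_nonneg_iff he).2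
      (L1.dilation_nonneg hpos hcontr hu ((splitL1_nonneg_iff he).2 hg)),
    fun g => ?_, fun g => ?_, fun g hg => ((splitL1_nonneg_iff he).2 hg).1, fun g => ?_,
    fun f => by simp, fun n f => ?_⟩
  · rw [LinearEquiv.conjRingEquiv_apply_apply, LinearEquiv.symm_symm, norm_splitL1_symm,
      norm_eq_norm_splitL1_fst_add_snd he g]
    exact L1.norm_dilation_le hpos hcontr hu_norm _
  · rw [LinearEquiv.conjRingEquiv_apply_apply, LinearEquiv.symm_symm, integral_splitL1_symm,
      L1.integral_dilation T u hu_integral, integral_eq_integral_splitL1_fst_add_snd he g]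
  · rw [norm_eq_norm_splitL1_fst_add_snd he g]
    exact le_add_of_nonneg_right (norm_nonneg _)
  · rw [← map_pow, LinearEquiv.conjRingEquiv_apply_apply]
    simp [L1.fst_dilation_pow_apply]
end

section
/- Let μ and ν be the product-type measures μ = ⋯ × {α₂} × {α₁} × μ₀ × λ × λ × ⋯ and ν = ⋯ × {α₂} × {α₁} × ν₀ × λ × λ × ⋯ on the bi-infinite product J^ℤ of copies of [0,1], built from the same conditioned families {αₙ} and Lebesgue measures λ, differing only in the 0-th coordinate factor where ν₀ ≪ μ₀. Then ν ≪ μ and the Radon–Nikodym derivative satisfies (dν/dμ)(…, x₋₁, x₀, x₁, …) = (dν₀/dμ₀)(x₀) for μ-a.e. point. -/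
/-! Mixing `κ` against `ν₀ = (dν₀/dμ₀) • μ₀` instead of `μ₀` reweights the mixture by the density
at the mixing parameter. Since `κ x₀` is concentrated on `{z | z 0 = x₀}`, that parameter can be
read off the point as its `0`-th coordinate, so `ν = (dν₀/dμ₀)(z 0) • μ`. -/

open MeasureTheory ProbabilityTheory
open scoped ENNReal

lemma MeasureTheory.Measure.comp_withDensity_eq_withDensity_comp {α β : Type*}
    [MeasurableSpace α] [MeasurableSpace β] (μ : Measure α) (κ : Kernel α β) {f : α → ℝ≥0∞}
    (hf : Measurable f) {g : β → α} (hg : Measurable g) (hκ : ∀ᵐ a ∂μ, ∀ᵐ b ∂κ a, g b = a) :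
    κ ∘ₘ μ.withDensity f = (κ ∘ₘ μ).withDensity (f ∘ g) := by
  ext s hs
  calc (κ ∘ₘ μ.withDensity f) s = ∫⁻ a, f a * κ a s ∂μ := by
        rw [Measure.bind_apply hs κ.aemeasurable,
          lintegral_withDensity_eq_lintegral_mul _ hf (κ.measurable_coe hs)]
        rfl
    _ = ∫⁻ a, ∫⁻ b in s, f (g b) ∂κ a ∂μ := by
        refine lintegral_congr_ae (hκ.mono fun a ha => ?_)
        dsimp only
        rw [setLIntegral_congr_fun_ae hs (ha.mono fun b hb _ => congrArg f hb),
          setLIntegral_const, mul_comm]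
    _ = (κ ∘ₘ μ).withDensity (f ∘ g) s := by
        rw [withDensity_apply _ hs, ← lintegral_indicator hs,
          Measure.lintegral_bind κ.aemeasurable ((hf.comp hg).indicator hs).aemeasurable]
        simp only [lintegral_indicator hs, Function.comp_apply]

/-- **Radon–Nikodym derivative of product-type measures differing only in the
0-th coordinate.** Model the bi-infinite product measures
`μ = ⋯ × {α₂} × {α₁} × μ₀ × λ × λ × ⋯` and
`ν = ⋯ × {α₂} × {α₁} × ν₀ × λ × λ × ⋯` on `J^ℤ` as follows: `κ` is the Markov
kernel assigning to each value `x₀` of the 0-th coordinate the conditional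
joint distribution of all coordinates (built from the conditioned families
`{αₙ}` and the Lebesgue factors `λ`), so that the 0-th coordinate of a
`κ x₀`-random point equals `x₀` a.s., and `μ`, `ν` are obtained by mixing `κ`
against `μ₀` resp. `ν₀`. If `ν₀ ≪ μ₀`, then `ν ≪ μ` and
`(dν/dμ)(…, x₋₁, x₀, x₁, …) = (dν₀/dμ₀)(x₀)` for μ-a.e. point. -/
theorem rnDeriv_product_type_measures
    (μ₀ ν₀ : Measure unitInterval) [IsFiniteMeasure μ₀] [IsFiniteMeasure ν₀]
    (hac : ν₀ ≪ μ₀)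
    (κ : Kernel unitInterval (ℤ → unitInterval)) [IsMarkovKernel κ]
    (hκ : ∀ x₀ : unitInterval, ∀ᵐ z ∂(κ x₀), z 0 = x₀)
    (μ ν : Measure (ℤ → unitInterval))
    (hμ : μ = Measure.map Prod.snd (μ₀ ⊗ₘ κ))
    (hν : ν = Measure.map Prod.snd (ν₀ ⊗ₘ κ)) :
    ν ≪ μ ∧ ν.rnDeriv μ =ᵐ[μ] fun z => ν₀.rnDeriv μ₀ (z 0) := by
  have hμ' : μ = κ ∘ₘ μ₀ := hμ.trans (Measure.snd_compProd μ₀ κ)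
  have : IsFiniteMeasure μ := hμ' ▸ inferInstance
  have hdensity : Measurable fun z : ℤ → unitInterval => ν₀.rnDeriv μ₀ (z 0) :=
    (Measure.measurable_rnDeriv _ _).comp (measurable_pi_apply 0)
  have hν' : ν = μ.withDensity fun z => ν₀.rnDeriv μ₀ (z 0) := calc
    ν = κ ∘ₘ μ₀.withDensity (ν₀.rnDeriv μ₀) := by
      rw [Measure.withDensity_rnDeriv_eq _ _ hac, hν]
      exact Measure.snd_compProd ν₀ κ
    _ = μ.withDensity fun z => ν₀.rnDeriv μ₀ (z 0) := by
      rw [hμ']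
      exact Measure.comp_withDensity_eq_withDensity_comp μ₀ κ (Measure.measurable_rnDeriv _ _)
        (measurable_pi_apply 0) (ae_of_all _ hκ)
  rw [hν']
  exact ⟨withDensity_absolutelyContinuous _ _, Measure.rnDeriv_withDensity _ hdensity⟩
end
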